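/- arXiv:2301.08644 — 3 statements merged into one kernel-verified Lean document; each statement's English description precedes it below -/
import Mathlib

section
/- Suppose a < 1 - 1/(2(β+1)) (diffusive regime). Then w_n / n^{1 - 2(a(β+1) - β)} converges, as n → ∞, to l(β) = (1/(1 + 2(β - a(β+1)))) · (Γ(a(β+1)+1)/Γ(β+1))^2. -/
/-!
Write `c = a (β + 1)`. The summand is `(A k μ k)² = K² (Γ(β + k) / Γ(c + k))²` with
`K = Γ(c + 1) / Γ(β + 1)`, and Euler's limit formula gives `Γ(t + k) ~ Γ(k) k^t` for every real `t`,
so the summand is asymptotic to `K² k^p` with `p = 2 (β - c)`; the diffusive regime is exactly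
`p > -1`. Comparing with the telescoping weights `(k + 1)^(p+1) - k^(p+1) ~ (p + 1) k^p`, whose
partial sums are exactly `n^(p+1)`, a discrete Stolz–Cesàro argument gives
`w n ~ K² n^(p+1) / (p + 1)`.
-/

open Filter Topology Finset Real Asymptotics

lemma Real.Gamma_add_nat_eq_mul_prod {t : ℝ} (ht : 0 < t) (n : ℕ) :
    Gamma (t + n) = Gamma t * ∏ j ∈ range n, (t + j) := by
  induction n with
  | zero => simp
  | succ n ih =>
    rw [prod_range_succ, ← mul_assoc, ← ih, Nat.cast_succ, ← add_assoc,
      Gamma_add_one (by positivity), mul_comm]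

lemma Real.tendsto_Gamma_add_div_Gamma_mul_rpow_of_pos {t : ℝ} (ht : 0 < t) :
    Tendsto (fun k : ℕ => Gamma (t + k) / (Gamma k * (k : ℝ) ^ t)) atTop (𝓝 1) := by
  rw [← tendsto_add_atTop_iff_nat 1]
  have hΓ : Gamma t ≠ 0 := (Gamma_pos_of_pos ht).ne'
  have hseq : Tendsto (fun n : ℕ => Gamma t / GammaSeq t n) atTop (𝓝 1) := by
    have := (tendsto_const_nhds (x := Gamma t)).div (GammaSeq_tendsto_Gamma t) hΓ
    rwa [div_self hΓ] at this
  have hpow : Tendsto (fun n : ℕ => ((n : ℝ) / (n + 1)) ^ t) atTop (𝓝 1) := by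
    simpa using (tendsto_natCast_div_add_atTop (1 : ℝ)).rpow_const (p := t) (Or.inl one_ne_zero)
  have hlim := hseq.mul hpow
  rw [mul_one] at hlim
  refine hlim.congr' ?_
  filter_upwards [eventually_gt_atTop 0] with n hn
  have hn' : (0 : ℝ) < n := by exact_mod_cast hn
  have hprod : 0 < ∏ j ∈ range (n + 1), (t + j) := prod_pos fun j _ => by positivity
  rw [GammaSeq, Gamma_add_nat_eq_mul_prod ht, Nat.cast_succ,
    Gamma_nat_eq_factorial, div_rpow hn'.le (by positivity)]
  field_simp

lemma Real.tendsto_Gamma_add_div_Gamma_mul_rpow_of_add_one {t : ℝ}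
    (h : Tendsto (fun k : ℕ => Gamma (t + 1 + k) / (Gamma k * (k : ℝ) ^ (t + 1))) atTop (𝓝 1)) :
    Tendsto (fun k : ℕ => Gamma (t + k) / (Gamma k * (k : ℝ) ^ t)) atTop (𝓝 1) := by
  have hlim := h.mul (tendsto_natCast_div_add_atTop t)
  rw [mul_one] at hlim
  refine hlim.congr' ?_
  filter_upwards [eventually_gt_atTop ⌈|t|⌉₊] with k hk
  have hkt : |t| < k := Nat.lt_of_ceil_lt hk
  have hk0 : (0 : ℝ) < k := (abs_nonneg t).trans_lt hkt
  have htk : (k : ℝ) + t ≠ 0 := by have := neg_abs_le t; linarith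
  rw [add_right_comm, Gamma_add_one (by rwa [add_comm]), rpow_add_one hk0.ne']
  field_simp
  ring

lemma Real.tendsto_Gamma_add_div_Gamma_mul_rpow (t : ℝ) :
    Tendsto (fun k : ℕ => Gamma (t + k) / (Gamma k * (k : ℝ) ^ t)) atTop (𝓝 1) := by
  obtain ⟨m, hm⟩ := exists_nat_gt (-t)
  induction m generalizing t with
  | zero => exact tendsto_Gamma_add_div_Gamma_mul_rpow_of_pos (by simpa using hm)
  | succ m ih =>
    exact tendsto_Gamma_add_div_Gamma_mul_rpow_of_add_one
      (ih (t + 1) (by push_cast at hm; linarith))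

lemma Real.tendsto_Gamma_add_div_Gamma_add_div_rpow (s t : ℝ) :
    Tendsto (fun k : ℕ => Gamma (s + k) / Gamma (t + k) / (k : ℝ) ^ (s - t)) atTop (𝓝 1) := by
  have hlim := (tendsto_Gamma_add_div_Gamma_mul_rpow s).div
    (tendsto_Gamma_add_div_Gamma_mul_rpow t) one_ne_zero
  rw [div_one] at hlim
  refine hlim.congr' ?_
  filter_upwards [eventually_gt_atTop 0] with k hk
  have hk0 : (0 : ℝ) < k := by exact_mod_cast hk
  have hΓ : Gamma k ≠ 0 := (Gamma_pos_of_pos hk0).ne'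
  rw [Pi.div_apply, rpow_sub hk0]
  field_simp

theorem Filter.Tendsto.sum_range_div_sum_range {y g : ℕ → ℝ} {ℓ : ℝ}
    (h : Tendsto (fun k => y k / g k) atTop (𝓝 ℓ)) (hg : ∀ k, 0 < g k)
    (hG : Tendsto (fun n => ∑ i ∈ range n, g i) atTop atTop) :
    Tendsto (fun n => (∑ i ∈ range n, y i) / ∑ i ∈ range n, g i) atTop (𝓝 ℓ) := by
  have hlo : (fun k => y k - ℓ * g k) =o[atTop] g := by
    rw [isLittleO_iff_tendsto' (.of_forall fun k hk => absurd hk (hg k).ne')]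
    have hsub := h.sub_const ℓ
    rw [sub_self] at hsub
    refine hsub.congr fun k => ?_
    rw [sub_div, mul_div_cancel_right₀ _ (hg k).ne']
  have hsum := ((hlo.sum_range (fun k => (hg k).le) hG).tendsto_div_nhds_zero).add_const ℓ
  rw [zero_add] at hsum
  refine hsum.congr' ?_
  filter_upwards [hG.eventually_gt_atTop 0] with n hn
  rw [sum_sub_distrib, ← mul_sum, sub_div, mul_div_cancel_right₀ _ hn.ne', sub_add_cancel]

lemma tendsto_add_one_rpow_sub_rpow_div (p : ℝ) :
    Tendsto (fun k : ℕ => (((k : ℝ) + 1) ^ (p + 1) - (k : ℝ) ^ (p + 1)) / ((k : ℝ) + 1) ^ p)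
      atTop (𝓝 (p + 1)) := by
  have hderiv := hasDerivAt_iff_tendsto_slope_zero.mp
    (hasDerivAt_rpow_const (x := 1) (p := p + 1) (Or.inl one_ne_zero))
  simp only [one_rpow, mul_one] at hderiv
  have hstep : Tendsto (fun k : ℕ => -((k : ℝ) + 1)⁻¹) atTop (𝓝[≠] 0) := by
    refine tendsto_nhdsWithin_of_tendsto_nhds_of_eventually_within _ ?_ (.of_forall fun k => ?_)
    · simpa using (tendsto_inv_atTop_zero.comp
        (tendsto_atTop_add_const_right _ 1 (tendsto_natCast_atTop_atTop (R := ℝ)))).neg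
    · simp only [Set.mem_compl_iff, Set.mem_singleton_iff, neg_eq_zero, inv_eq_zero]
      positivity
  -- the difference quotient of `x ^ (p + 1)` at `1` with step `-1 / (k + 1)`
  refine (hderiv.comp hstep).congr fun k => ?_
  have hk : (0 : ℝ) < k + 1 := by positivity
  have hsub : 1 + -((k : ℝ) + 1)⁻¹ = k / (k + 1) := by field_simp; ring
  simp only [Function.comp_apply, smul_eq_mul, hsub,
    div_rpow (Nat.cast_nonneg k) hk.le, rpow_add_one hk.ne']
  field_simp
  ring

theorem tendsto_sum_Icc_div_rpow {x : ℕ → ℝ} {p L : ℝ} (hp : -1 < p)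
    (hx : Tendsto (fun k : ℕ => x k / (k : ℝ) ^ p) atTop (𝓝 L)) :
    Tendsto (fun n : ℕ => (∑ k ∈ Icc 1 n, x k) / (n : ℝ) ^ (p + 1)) atTop (𝓝 (L / (p + 1))) := by
  have hq : 0 < p + 1 := by linarith
  set g : ℕ → ℝ := fun k => ((k : ℝ) + 1) ^ (p + 1) - (k : ℝ) ^ (p + 1)
  have hg_pos : ∀ k, 0 < g k := fun k =>
    sub_pos.mpr (rpow_lt_rpow (Nat.cast_nonneg k) (lt_add_one _) hq)
  have hg_sum : ∀ n, ∑ k ∈ range n, g k = (n : ℝ) ^ (p + 1) := fun n => by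
    have hsum := sum_range_sub (fun k : ℕ => (k : ℝ) ^ (p + 1)) n
    push_cast at hsum
    rwa [zero_rpow hq.ne', sub_zero] at hsum
  have hx_sum : ∀ n, ∑ k ∈ Icc 1 n, x k = ∑ k ∈ range n, x (k + 1) := fun n => by
    rw [← Finset.Ico_add_one_right_eq_Icc, sum_Ico_eq_sum_range]
    simp [add_comm]
  have hratio : Tendsto (fun k => x (k + 1) / g k) atTop (𝓝 (L / (p + 1))) := by
    have hx' := ((tendsto_add_atTop_iff_nat 1).mpr hx).div
      (tendsto_add_one_rpow_sub_rpow_div p) hq.ne'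
    refine hx'.congr fun k => ?_
    push_cast
    exact div_div_div_cancel_right₀ (by positivity) _ _
  have hG : Tendsto (fun n => ∑ k ∈ range n, g k) atTop atTop :=
    ((tendsto_rpow_atTop hq).comp tendsto_natCast_atTop_atTop).congr fun n => (hg_sum n).symm
  simpa only [hx_sum, hg_sum] using hratio.sum_range_div_sum_range hg_pos hG

theorem stmt_3_general (β a : ℝ) (hβ : 0 ≤ β)
    (hreg : a < 1 - 1 / (2 * (β + 1)))
    (μ A w : ℕ → ℝ)
    (hμ : ∀ k : ℕ, μ k = Real.Gamma (β + k) / (Real.Gamma k * Real.Gamma (β + 1)))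
    (hA : ∀ k : ℕ, A k = Real.Gamma k * Real.Gamma (a * (β + 1) + 1) /
      Real.Gamma (a * (β + 1) + k))
    (hw : ∀ n : ℕ, w n = ∑ k ∈ Finset.Icc 1 n, (A k * μ k) ^ 2) :
    Filter.Tendsto (fun n : ℕ => w n / (n : ℝ) ^ (1 - 2 * (a * (β + 1) - β)))
      Filter.atTop
      (nhds ((1 / (1 + 2 * (β - a * (β + 1)))) *
        (Real.Gamma (a * (β + 1) + 1) / Real.Gamma (β + 1)) ^ 2)) := by
  set c := a * (β + 1)
  have hβ1 : 0 < β + 1 := by linarith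
  have hp : -1 < 2 * (β - c) := by
    have := mul_lt_mul_of_pos_right hreg hβ1
    field_simp at this
    linarith
  have hterm : Tendsto (fun k : ℕ => (A k * μ k) ^ 2 / (k : ℝ) ^ (2 * (β - c))) atTop
      (𝓝 ((Gamma (c + 1) / Gamma (β + 1)) ^ 2)) := by
    have hlim := ((tendsto_Gamma_add_div_Gamma_add_div_rpow β c).const_mul
      (Gamma (c + 1) / Gamma (β + 1))).pow 2
    rw [mul_one] at hlim
    refine hlim.congr' ?_
    filter_upwards [eventually_gt_atTop 0] with k hk
    have hk0 : (0 : ℝ) < k := by exact_mod_cast hk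
    have hΓ : Gamma k ≠ 0 := (Gamma_pos_of_pos hk0).ne'
    have hΓβ : Gamma (β + 1) ≠ 0 := (Gamma_pos_of_pos hβ1).ne'
    rw [mul_comm 2, rpow_mul hk0.le, rpow_two, hA, hμ]
    field_simp
  convert tendsto_sum_Icc_div_rpow hp hterm using 2 with n
  · rw [hw, show 1 - 2 * (c - β) = 2 * (β - c) + 1 by ring]
  · ring

theorem stmt_3 (β a : ℝ) (d : ℕ) (hd : 1 ≤ d) (hβ : 0 ≤ β)
    (ha₁ : -1 / (2 * (d : ℝ) - 1) < a) (ha₂ : a < 1)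
    (hreg : a < 1 - 1 / (2 * (β + 1)))
    (μ A w : ℕ → ℝ)
    (hμ : ∀ k : ℕ, μ k = Real.Gamma (β + k) / (Real.Gamma k * Real.Gamma (β + 1)))
    (hA : ∀ k : ℕ, A k = Real.Gamma k * Real.Gamma (a * (β + 1) + 1) /
      Real.Gamma (a * (β + 1) + k))
    (hw : ∀ n : ℕ, w n = ∑ k ∈ Finset.Icc 1 n, (A k * μ k) ^ 2) :
    Filter.Tendsto (fun n : ℕ => w n / (n : ℝ) ^ (1 - 2 * (a * (β + 1) - β)))
      Filter.atTop
      (nhds ((1 / (1 + 2 * (β - a * (β + 1)))) *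
        (Real.Gamma (a * (β + 1) + 1) / Real.Gamma (β + 1)) ^ 2)) :=
  stmt_3_general β a hβ hreg μ A w hμ hA hw
end

section
/- Suppose a = 1 - 1/(2(β+1)) (critical regime). Then w_n / log n converges, as n → ∞, to (Γ(β + 3/2)/Γ(β+1))^2. -/
/-!
With `a (β + 1) = β + 1/2` the summand collapses to `(Γ(β + 3/2)/Γ(β + 1))² · r(β + k)²`, where
`r(x) = Γ(x)/Γ(x + 1/2)`. Log-convexity of `Γ` at the midpoints `x + 1/2` and `x + 1` gives
`1/x ≤ r(x)² ≤ (x + 1/2)/x²`, so `r(β + k)² = 1/k + O(1/k²)`. Hence the partial sums differ from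
the harmonic numbers, and so from `log n`, by a bounded amount.
-/

open Real Filter Finset Topology Asymptotics

theorem Real.Gamma_add_div_two_sq_le_mul {x y : ℝ} (hx : 0 < x) (hy : 0 < y) :
    Gamma ((x + y) / 2) ^ 2 ≤ Gamma x * Gamma y := by
  have hconv := convexOn_log_Gamma.2 (Set.mem_Ioi.mpr hx) (Set.mem_Ioi.mpr hy)
    (by norm_num : (0:ℝ) ≤ 1 / 2) (by norm_num : (0:ℝ) ≤ 1 / 2) (by norm_num)
  simp only [Function.comp, smul_eq_mul] at hconv
  rw [show 1 / 2 * x + 1 / 2 * y = (x + y) / 2 by ring] at hconv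
  rw [← log_le_log_iff (by positivity [Gamma_pos_of_pos (add_pos hx hy)])
    (mul_pos (Gamma_pos_of_pos hx) (Gamma_pos_of_pos hy)),
    log_pow, log_mul (Gamma_pos_of_pos hx).ne' (Gamma_pos_of_pos hy).ne']
  push_cast
  linarith

theorem Real.inv_le_Gamma_div_Gamma_add_half_sq {x : ℝ} (hx : 0 < x) :
    x⁻¹ ≤ (Gamma x / Gamma (x + 1 / 2)) ^ 2 := by
  have h := Gamma_add_div_two_sq_le_mul hx (by linarith : 0 < x + 1)
  rw [show (x + (x + 1)) / 2 = x + 1 / 2 by ring, Gamma_add_one hx.ne'] at h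
  have hΓ := Gamma_pos_of_pos hx
  rw [div_pow, inv_le_comm₀ hx (by positivity [Gamma_pos_of_pos (by linarith : 0 < x + 1 / 2)]),
    inv_div, div_le_iff₀ (by positivity)]
  nlinarith

theorem Real.Gamma_div_Gamma_add_half_sq_le {x : ℝ} (hx : 0 < x) :
    (Gamma x / Gamma (x + 1 / 2)) ^ 2 ≤ (x + 1 / 2) / x ^ 2 := by
  have h := Gamma_add_div_two_sq_le_mul (by linarith : 0 < x + 1 / 2) (by linarith : 0 < x + 3 / 2)
  rw [show (x + 1 / 2 + (x + 3 / 2)) / 2 = x + 1 by ring, Gamma_add_one hx.ne',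
    show x + 3 / 2 = x + 1 / 2 + 1 by ring, Gamma_add_one (by linarith)] at h
  have hΓ := Gamma_pos_of_pos hx
  have hΓ' := Gamma_pos_of_pos (by linarith : 0 < x + 1 / 2)
  rw [div_pow, div_le_div_iff₀ (by positivity) (by positivity)]
  nlinarith

theorem Real.abs_Gamma_div_Gamma_add_half_sq_sub_inv_le {β k : ℝ} (hβ : 0 ≤ β) (hk : 1 ≤ k) :
    |(Gamma (β + k) / Gamma (β + k + 1 / 2)) ^ 2 - k⁻¹| ≤ (β + 1) * (k ^ 2)⁻¹ := by
  have hk0 : 0 < k := by linarith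
  have hx : 0 < β + k := by linarith
  have hlow := inv_le_Gamma_div_Gamma_add_half_sq hx
  have hup := Gamma_div_Gamma_add_half_sq_le hx
  rw [abs_le]
  constructor
  · have : k⁻¹ - (β + 1) * (k ^ 2)⁻¹ ≤ (β + k)⁻¹ := by
      have hdiff : (β + k)⁻¹ - (k⁻¹ - (β + 1) * (k ^ 2)⁻¹) =
          (β ^ 2 + β + k) / (k ^ 2 * (β + k)) := by
        field_simp; ring
      rw [← sub_nonneg, hdiff]; positivity
    linarith
  · have : (β + k + 1 / 2) / (β + k) ^ 2 ≤ k⁻¹ + (β + 1) * (k ^ 2)⁻¹ :=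
      calc (β + k + 1 / 2) / (β + k) ^ 2 = (β + k)⁻¹ + 1 / 2 * ((β + k) ^ 2)⁻¹ := by field_simp
        _ ≤ k⁻¹ + (β + 1) * (k ^ 2)⁻¹ := by gcongr <;> linarith
    linarith

theorem sum_Icc_inv_sq_le_two (n : ℕ) : ∑ k ∈ Icc 1 n, ((k : ℝ) ^ 2)⁻¹ ≤ 2 := by
  have h := sum_Ioo_inv_sq_le (α := ℝ) 0 (n + 1)
  rw [show Ioo 0 (n + 1) = Icc 1 n by ext; simp; omega] at h
  simpa using h

theorem abs_harmonic_sub_log_le (n : ℕ) : |(harmonic n : ℝ) - log n| ≤ 1 := by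
  have hlog : log n ≤ log (n + 1 : ℕ) := by
    rcases n.eq_zero_or_pos with rfl | hn
    · simp
    · exact log_le_log (by exact_mod_cast hn) (by push_cast; linarith)
  rw [abs_le]
  constructor <;> linarith [log_add_one_le_harmonic n, harmonic_le_one_add_log n]

theorem abs_sum_Icc_sub_log_le {f : ℕ → ℝ} {C : ℝ}
    (hf : ∀ k, 1 ≤ k → |f k - (k : ℝ)⁻¹| ≤ C * ((k : ℝ) ^ 2)⁻¹) (n : ℕ) :
    |∑ k ∈ Icc 1 n, f k - log n| ≤ 2 * C + 1 := by
  have hC : 0 ≤ C := by simpa using (abs_nonneg _).trans (hf 1 le_rfl)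
  have hdev : |∑ k ∈ Icc 1 n, (f k - (k : ℝ)⁻¹)| ≤ 2 * C :=
    calc |∑ k ∈ Icc 1 n, (f k - (k : ℝ)⁻¹)|
        ≤ ∑ k ∈ Icc 1 n, C * ((k : ℝ) ^ 2)⁻¹ :=
          (abs_sum_le_sum_abs _ _).trans (sum_le_sum fun k hk => hf k (mem_Icc.1 hk).1)
      _ ≤ C * 2 := by rw [← mul_sum]; exact mul_le_mul_of_nonneg_left (sum_Icc_inv_sq_le_two n) hC
      _ = 2 * C := mul_comm _ _
  have hH : (harmonic n : ℝ) = ∑ k ∈ Icc 1 n, (k : ℝ)⁻¹ := by simp [harmonic_eq_sum_Icc]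
  have hsplit : ∑ k ∈ Icc 1 n, f k - log n =
      ∑ k ∈ Icc 1 n, (f k - (k : ℝ)⁻¹) + ((harmonic n : ℝ) - log n) := by
    rw [sum_sub_distrib, hH]; ring
  rw [hsplit]
  exact (abs_add_le _ _).trans (add_le_add hdev (abs_harmonic_sub_log_le n))

theorem tendsto_div_one_of_abs_sub_le {α : Type*} {l : Filter α} {u g : α → ℝ} {B : ℝ}
    (hg : Tendsto g l atTop) (h : ∀ᶠ x in l, |u x - g x| ≤ B) :
    Tendsto (fun x => u x / g x) l (𝓝 1) := by
  have hO : (u - g) =O[l] (fun _ => (1 : ℝ)) :=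
    IsBigO.of_bound B (h.mono fun x hx => by simpa using hx)
  have ho : (fun _ => (1 : ℝ)) =o[l] g :=
    (isLittleO_one_left_iff ℝ).2 (tendsto_norm_atTop_atTop.comp hg)
  exact (isEquivalent_iff_tendsto_one (hg.eventually_ne_atTop 0)).1 (hO.trans_isLittleO ho)

theorem tendsto_sum_Icc_div_log {f : ℕ → ℝ} {C : ℝ}
    (hf : ∀ k, 1 ≤ k → |f k - (k : ℝ)⁻¹| ≤ C * ((k : ℝ) ^ 2)⁻¹) :
    Tendsto (fun n : ℕ => (∑ k ∈ Icc 1 n, f k) / log n) atTop (𝓝 1) :=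
  tendsto_div_one_of_abs_sub_le (tendsto_log_atTop.comp tendsto_natCast_atTop_atTop)
    (Eventually.of_forall (abs_sum_Icc_sub_log_le hf))

theorem stmt_4 (β a : ℝ) (hβ : 0 ≤ β) (ha : a = 1 - 1 / (2 * (β + 1)))
    (μ A w : ℕ → ℝ)
    (hμ : ∀ k : ℕ, μ k = Real.Gamma (β + k) / (Real.Gamma k * Real.Gamma (β + 1)))
    (hA : ∀ k : ℕ, A k = Real.Gamma k * Real.Gamma (a * (β + 1) + 1) /
      Real.Gamma (a * (β + 1) + k))
    (hw : ∀ n : ℕ, w n = ∑ k ∈ Finset.Icc 1 n, (A k * μ k) ^ 2) :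
    Filter.Tendsto (fun n : ℕ => w n / Real.log n) Filter.atTop
      (nhds ((Real.Gamma (β + 3 / 2) / Real.Gamma (β + 1)) ^ 2)) := by
  have haβ : a * (β + 1) = β + 1 / 2 := by
    rw [ha]; field_simp [(by linarith : β + 1 ≠ 0)]; ring
  have hterm : ∀ k : ℕ, 1 ≤ k → (A k * μ k) ^ 2 = (Gamma (β + 3 / 2) / Gamma (β + 1)) ^ 2 *
      (Gamma (β + k) / Gamma (β + k + 1 / 2)) ^ 2 := by
    intro k hk
    have hk : (1 : ℝ) ≤ k := by exact_mod_cast hk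
    have := Gamma_pos_of_pos (by linarith : (0 : ℝ) < k)
    have := Gamma_pos_of_pos (by linarith : 0 < β + 1)
    have := Gamma_pos_of_pos (by linarith : 0 < β + k + 1 / 2)
    rw [hA, hμ, haβ, show β + 1 / 2 + 1 = β + 3 / 2 by ring,
      show β + 1 / 2 + k = β + k + 1 / 2 by ring]
    field_simp
  have hlim := (tendsto_sum_Icc_div_log fun k hk =>
    abs_Gamma_div_Gamma_add_half_sq_sub_inv_le hβ (by exact_mod_cast hk : (1 : ℝ) ≤ k)).const_mul
      ((Gamma (β + 3 / 2) / Gamma (β + 1)) ^ 2)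
  rw [mul_one] at hlim
  refine hlim.congr fun n => ?_
  rw [hw, sum_congr rfl fun k hk => hterm k (mem_Icc.1 hk).1, ← mul_sum, mul_div_assoc]
end

section
/- Suppose a > 1 - 1/(2(β+1)) (superdiffusive regime). Then the sequence w_n converges, as n → ∞, to the finite sum ∑_{k=1}^{∞} (Γ(a(β+1)+1)Γ(β+k)/(Γ(a(β+1)+k)Γ(β+1)))^2 < ∞. -/
/-!
Put `c = a(β + 1)` and `d = c - β`; the superdiffusive condition says exactly `1/2 < d`, and
`a < 1` gives `d < 1`. Since `A k μ k = Γ(c+1) Γ(β+k) / (Γ(β+1) Γ(β+k+d))`, the `k`-th term of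
`w` is a constant times `(Γ(x)/Γ(x+d))²` with `x = β + k`. Log-convexity of `Γ` (Wendel's
inequality) bounds `Γ(x)/Γ(x+d)` by `2 x^(-d)`, so the terms are `O(k^(-2d))` with `2d > 1`,
and `w` is the sequence of partial sums of a convergent series.
-/

open Real Finset

namespace Real

theorem Gamma_div_Gamma_add_le {x d : ℝ} (hx : 0 < x) (hd0 : 0 < d) (hd1 : d < 1) :
    Gamma x / Gamma (x + d) ≤ (x + d) ^ (1 - d) / x := by
  have hxd : 0 < x + d := by linarith
  have hΓ : 0 < Gamma (x + d) := Gamma_pos_of_pos hxd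
  -- `x + 1` is the convex combination `d (x + d) + (1 - d) (x + d + 1)`.
  have hconv := Gamma_mul_add_mul_le_rpow_Gamma_mul_rpow_Gamma hxd (by linarith : 0 < x + d + 1)
    hd0 (by linarith : 0 < 1 - d) (by ring)
  rw [div_le_div_iff₀ hΓ hx]
  calc Gamma x * x = Gamma (d * (x + d) + (1 - d) * (x + d + 1)) := by
        rw [show d * (x + d) + (1 - d) * (x + d + 1) = x + 1 by ring, Gamma_add_one hx.ne']
        ring
    _ ≤ Gamma (x + d) ^ d * ((x + d) * Gamma (x + d)) ^ (1 - d) := by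
        rwa [← Gamma_add_one hxd.ne']
    _ = (x + d) ^ (1 - d) * Gamma (x + d) := by
        rw [mul_rpow hxd.le hΓ.le, mul_left_comm, ← rpow_add hΓ, add_sub_cancel, rpow_one]

theorem Gamma_div_Gamma_add_le_two_mul_rpow {x d : ℝ} (hdx : d ≤ x) (hd0 : 0 < d) (hd1 : d < 1) :
    Gamma x / Gamma (x + d) ≤ 2 * x ^ (-d) := by
  have hx : 0 < x := hd0.trans_le hdx
  calc Gamma x / Gamma (x + d) ≤ (x + d) ^ (1 - d) / x := Gamma_div_Gamma_add_le hx hd0 hd1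
    _ ≤ (2 * x) ^ (1 - d) / x := by gcongr; linarith
    _ = 2 ^ (1 - d) * x ^ (-d) := by
        rw [mul_rpow zero_le_two hx.le, mul_div_assoc, sub_eq_add_neg, add_comm,
          rpow_add_one hx.ne', mul_div_cancel_right₀ _ hx.ne']
    _ ≤ 2 * x ^ (-d) := by
        gcongr
        exact rpow_le_self_of_one_le one_le_two (by linarith)

theorem summable_sq_Gamma_div_Gamma_add {β d : ℝ} (hβ : 0 ≤ β) (hd0 : 1 / 2 < d) (hd1 : d < 1) :
    Summable fun k : ℕ => (Gamma (β + (k + 1)) / Gamma (β + (k + 1) + d)) ^ 2 := by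
  have hp : Summable fun k : ℕ => ((k : ℝ) + 1) ^ (-(2 * d)) := by
    simpa using (summable_nat_add_iff 1).mpr (summable_nat_rpow.mpr (by linarith : -(2 * d) < -1))
  refine (hp.mul_left 4).of_nonneg_of_le (fun k => sq_nonneg _) fun k => ?_
  have hk : (0 : ℝ) < k + 1 := by positivity
  have hx : (k : ℝ) + 1 ≤ β + (k + 1) := by linarith
  have hx0 : 0 < β + (k + 1) := hk.trans_le hx
  calc (Gamma (β + (k + 1)) / Gamma (β + (k + 1) + d)) ^ 2
      ≤ (2 * (β + (k + 1)) ^ (-d)) ^ 2 := by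
        refine pow_le_pow_left₀ ?_ ?_ 2
        · exact (div_pos (Gamma_pos_of_pos hx0) (Gamma_pos_of_pos (by linarith))).le
        · exact Gamma_div_Gamma_add_le_two_mul_rpow (by linarith) (by linarith) hd1
    _ = 4 * (β + (k + 1)) ^ (-(2 * d)) := by
        rw [mul_pow, ← rpow_mul_natCast hx0.le]
        push_cast
        ring_nf
    _ ≤ 4 * ((k : ℝ) + 1) ^ (-(2 * d)) :=
        mul_le_mul_of_nonneg_left (rpow_le_rpow_of_nonpos hk hx (by linarith)) zero_le_four

theorem summable_sq_Gamma_mul_Gamma_div {β c : ℝ} (hβ : 0 ≤ β) (hd0 : 1 / 2 < c - β)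
    (hd1 : c - β < 1) :
    Summable fun k : ℕ =>
      (Gamma (c + 1) * Gamma (β + (k + 1)) / (Gamma (c + (k + 1)) * Gamma (β + 1))) ^ 2 := by
  have hterm : ∀ k : ℕ,
      (Gamma (c + 1) * Gamma (β + (k + 1)) / (Gamma (c + (k + 1)) * Gamma (β + 1))) ^ 2 =
        (Gamma (c + 1) / Gamma (β + 1)) ^ 2 *
          (Gamma (β + (k + 1)) / Gamma (β + (k + 1) + (c - β))) ^ 2 := by
    intro k
    rw [show β + (k + 1) + (c - β) = c + (k + 1) by ring]
    ring
  simp_rw [hterm]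
  exact (summable_sq_Gamma_div_Gamma_add hβ hd0 hd1).mul_left _

end Real

theorem stmt_5_general (β a : ℝ) (hβ : 0 ≤ β) (ha1 : a < 1)
    (hreg : 1 - 1 / (2 * (β + 1)) < a)
    (μ A w : ℕ → ℝ)
    (hμ : ∀ k : ℕ, μ k = Real.Gamma (β + k) / (Real.Gamma k * Real.Gamma (β + 1)))
    (hA : ∀ k : ℕ, A k = Real.Gamma k * Real.Gamma (a * (β + 1) + 1) /
      Real.Gamma (a * (β + 1) + k))
    (hw : ∀ n : ℕ, w n = ∑ k ∈ Finset.Icc 1 n, (A k * μ k) ^ 2) :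
    Summable (fun k : ℕ =>
      (Real.Gamma (a * (β + 1) + 1) * Real.Gamma (β + ((k : ℝ) + 1)) /
        (Real.Gamma (a * (β + 1) + ((k : ℝ) + 1)) * Real.Gamma (β + 1))) ^ 2) ∧
    Filter.Tendsto w Filter.atTop
      (nhds (∑' k : ℕ,
        (Real.Gamma (a * (β + 1) + 1) * Real.Gamma (β + ((k : ℝ) + 1)) /
          (Real.Gamma (a * (β + 1) + ((k : ℝ) + 1)) * Real.Gamma (β + 1))) ^ 2)) := by
  have hβ1 : 0 < β + 1 := by linarith
  have hd0 : 1 / 2 < a * (β + 1) - β := by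
    have hgap : a * (β + 1) - β - 1 / 2 = (a - (1 - 1 / (2 * (β + 1)))) * (β + 1) := by
      field_simp
      ring
    linarith [mul_pos (sub_pos.2 hreg) hβ1]
  have hd1 : a * (β + 1) - β < 1 := by nlinarith
  have hsum := summable_sq_Gamma_mul_Gamma_div hβ hd0 hd1
  refine ⟨hsum, ?_⟩
  convert hsum.hasSum.tendsto_sum_nat using 2 with n
  rw [hw, ← Ico_add_one_right_eq_Icc, sum_Ico_eq_sum_range, Nat.add_sub_cancel]
  refine sum_congr rfl fun k _ => ?_
  have hΓk : Gamma (k + 1) ≠ 0 := (Gamma_pos_of_pos (by positivity)).ne'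
  rw [hA, hμ]
  push_cast
  rw [add_comm 1 (k : ℝ)]
  congr 1
  field_simp

theorem stmt_5 (β a : ℝ) (hβ : 0 ≤ β) (ha0 : 0 < a) (ha1 : a < 1)
    (hreg : 1 - 1 / (2 * (β + 1)) < a)
    (μ A w : ℕ → ℝ)
    (hμ : ∀ k : ℕ, μ k = Real.Gamma (β + k) / (Real.Gamma k * Real.Gamma (β + 1)))
    (hA : ∀ k : ℕ, A k = Real.Gamma k * Real.Gamma (a * (β + 1) + 1) /
      Real.Gamma (a * (β + 1) + k))
    (hw : ∀ n : ℕ, w n = ∑ k ∈ Finset.Icc 1 n, (A k * μ k) ^ 2) :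
    Summable (fun k : ℕ =>
      (Real.Gamma (a * (β + 1) + 1) * Real.Gamma (β + ((k : ℝ) + 1)) /
        (Real.Gamma (a * (β + 1) + ((k : ℝ) + 1)) * Real.Gamma (β + 1))) ^ 2) ∧
    Filter.Tendsto w Filter.atTop
      (nhds (∑' k : ℕ,
        (Real.Gamma (a * (β + 1) + 1) * Real.Gamma (β + ((k : ℝ) + 1)) /
          (Real.Gamma (a * (β + 1) + ((k : ℝ) + 1)) * Real.Gamma (β + 1))) ^ 2)) :=
  stmt_5_general β a hβ ha1 hreg μ A w hμ hA hw
end
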